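/- Let d ≥ 2 and let G be a closed self-similar subgroup of Aut T_d containing the standard odometer ω; let Ω ≤ G denote the topological closure of the cyclic subgroup generated by ω. Then for every closed subgroup H ≤ Ω, the self-similar closure of H in G is contained in Ω. In particular, Ω is itself a self-similar subgroup of Aut T_d. -/

import Mathlib

open scoped Pointwise

namespace TreeDyn

/-- Vertices of the `d`-regular rooted tree: finite words over `{0,…,d-1}`,
with the empty word as root and children of `w` the words `w ++ [x]`. -/
abbrev Vertex (d : ℕ) := List (Fin d)

/-- A function on words is length-preserving and prefix-preserving. -/
def LP (d : ℕ) (f : Vertex d → Vertex d) : Prop :=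
  (∀ w : Vertex d, (f w).length = w.length) ∧
    ∀ v w : Vertex d, v <+: w → f v <+: f w

theorem LP.id' (d : ℕ) : LP d id := ⟨fun _ => rfl, fun _ _ h => h⟩

theorem LP.comp {d : ℕ} {f g : Vertex d → Vertex d} (hf : LP d f) (hg : LP d g) :
    LP d (f ∘ g) :=
  ⟨fun w => (hf.1 (g w)).trans (hg.1 w), fun v w h => hf.2 _ _ (hg.2 _ _ h)⟩

/-- The automorphism group of the rooted `d`-regular tree, realized as the subgroup of
permutations of the vertex set which fix the root and preserve the child relation
(equivalently: length- and prefix-preserving permutations). -/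
def treeAut (d : ℕ) : Subgroup (Equiv.Perm (Vertex d)) where
  carrier := {g | LP d ⇑g ∧ LP d ⇑g⁻¹}
  one_mem' := ⟨LP.id' d, by simpa using LP.id' d⟩
  mul_mem' := by
    rintro a b ⟨ha1, ha2⟩ ⟨hb1, hb2⟩
    refine ⟨?_, ?_⟩
    · simpa [Equiv.Perm.coe_mul] using ha1.comp hb1
    · rw [mul_inv_rev]
      simpa [Equiv.Perm.coe_mul] using hb2.comp ha2
  inv_mem' := by
    rintro a ⟨h1, h2⟩
    exact ⟨h2, by simpa using h1⟩

/-- `Aut T_d`, the automorphism group of the `d`-regular rooted tree. -/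
abbrev AutT (d : ℕ) := ↥(treeAut d)

namespace AutT

variable {d : ℕ}

/-- The underlying permutation of the vertices. -/
def toPerm (g : AutT d) : Equiv.Perm (Vertex d) := g.1

theorem toPerm_mul (g h : AutT d) : (g * h).toPerm = g.toPerm * h.toPerm := rfl

theorem toPerm_inv (g : AutT d) : (g⁻¹).toPerm = (g.toPerm)⁻¹ := rfl

theorem toPerm_one : (1 : AutT d).toPerm = 1 := rfl

theorem length_apply (g : AutT d) (w : Vertex d) : (g.toPerm w).length = w.length :=
  g.2.1.1 w

theorem prefix_apply (g : AutT d) {v w : Vertex d} (h : v <+: w) :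
    g.toPerm v <+: g.toPerm w :=
  g.2.1.2 v w h

theorem take_apply (g : AutT d) (v u : Vertex d) :
    (g.toPerm (v ++ u)).take v.length = g.toPerm v := by
  have h : g.toPerm v <+: g.toPerm (v ++ u) := g.prefix_apply (List.prefix_append v u)
  have h2 := List.prefix_iff_eq_take.mp h
  rw [length_apply] at h2
  exact h2.symm

theorem apply_append (g : AutT d) (v u : Vertex d) :
    g.toPerm (v ++ u) = g.toPerm v ++ (g.toPerm (v ++ u)).drop v.length := by
  conv_lhs => rw [← List.take_append_drop v.length (g.toPerm (v ++ u))]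
  rw [take_apply]

/-- The section function: the action of `g` on the subtree over `v`, transported
to the whole tree. -/
def secFun (g : AutT d) (v : Vertex d) : Vertex d → Vertex d :=
  fun u => (g.toPerm (v ++ u)).drop v.length

theorem secFun_spec (g : AutT d) (v u : Vertex d) :
    g.toPerm (v ++ u) = g.toPerm v ++ secFun g v u :=
  apply_append g v u

theorem secFun_left (g : AutT d) (v u : Vertex d) :
    secFun g⁻¹ (g.toPerm v) (secFun g v u) = u := by
  have h1 := secFun_spec g⁻¹ (g.toPerm v) (secFun g v u)
  rw [← secFun_spec g v u] at h1
  rw [toPerm_inv] at h1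
  simp only [Equiv.Perm.coe_inv, Equiv.symm_apply_apply] at h1
  exact (List.append_cancel_left h1).symm

theorem LP_secFun (g : AutT d) (v : Vertex d) : LP d (secFun g v) := by
  constructor
  · intro w
    simp only [secFun, List.length_drop, length_apply, List.length_append]
    omega
  · intro u1 u2 h
    have h2 : g.toPerm (v ++ u1) <+: g.toPerm (v ++ u2) := by
      refine g.prefix_apply ?_
      obtain ⟨t, ht⟩ := h
      exact ⟨t, by rw [List.append_assoc, ht]⟩
    exact h2.drop v.length

/-- The section of the tree automorphism `g` at the vertex `v`: the automorphism `g|_v` with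
`g (v ++ u) = g v ++ g|_v u`. -/
def sec (g : AutT d) (v : Vertex d) : AutT d :=
  ⟨{ toFun := secFun g v
     invFun := secFun g⁻¹ (g.toPerm v)
     left_inv := secFun_left g v
     right_inv := by
       intro u
       have h := secFun_left g⁻¹ (g.toPerm v) u
       rw [inv_inv] at h
       rw [toPerm_inv] at h
       simp only [Equiv.Perm.coe_inv, Equiv.symm_apply_apply] at h
       exact h },
   by
     refine ⟨LP_secFun g v, ?_⟩
     have : ⇑(({ toFun := secFun g v
                 invFun := secFun g⁻¹ (g.toPerm v)
                 left_inv := secFun_left g v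
                 right_inv := by
                   intro u
                   have h := secFun_left g⁻¹ (g.toPerm v) u
                   rw [inv_inv] at h
                   rw [toPerm_inv] at h
                   simp only [Equiv.Perm.coe_inv, Equiv.symm_apply_apply] at h
                   exact h } : Equiv.Perm (Vertex d))⁻¹) = secFun g⁻¹ (g.toPerm v) := rfl
     rw [this]
     exact LP_secFun g⁻¹ (g.toPerm v)⟩

theorem sec_apply (g : AutT d) (v u : Vertex d) :
    (sec g v).toPerm u = (g.toPerm (v ++ u)).drop v.length := rfl

end AutT

open AutT

/-- The stabilizer of the vertex `v` in `Aut T_d`. -/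
def stabT (d : ℕ) (v : Vertex d) : Subgroup (AutT d) where
  carrier := {g | g.toPerm v = v}
  one_mem' := rfl
  mul_mem' := by
    intro a b ha hb
    show (a * b).toPerm v = v
    rw [toPerm_mul, Equiv.Perm.mul_apply]
    rw [show b.toPerm v = v from hb, show a.toPerm v = v from ha]
  inv_mem' := by
    intro a ha
    show (a⁻¹).toPerm v = v
    rw [toPerm_inv]
    rw [Equiv.Perm.inv_eq_iff_eq]
    exact (show a.toPerm v = v from ha).symm

/-- The self-similarity homomorphism `π_v` from the stabilizer of `v` to `Aut T_d`,
`g ↦ g|_v`. -/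
def secHom (d : ℕ) (v : Vertex d) : (stabT d v) →* AutT d where
  toFun g := sec g.1 v
  map_one' := by
    apply Subtype.ext
    apply Equiv.ext
    intro u
    show ((1 : AutT d).toPerm (v ++ u)).drop v.length = (1 : AutT d).toPerm u
    rw [toPerm_one]
    simp [List.drop_left]
  map_mul' := by
    intro a b
    apply Subtype.ext
    apply Equiv.ext
    intro u
    have hb : (b.1).toPerm v = v := b.2
    show ((a.1 * b.1).toPerm (v ++ u)).drop v.length
        = (sec a.1 v).toPerm ((sec b.1 v).toPerm u)
    rw [toPerm_mul, Equiv.Perm.mul_apply]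
    congr 1
    congr 1
    have h := secFun_spec b.1 v u
    rw [hb] at h
    exact h

/-- The image subgroup `H^v = π_v(H_v)` of the stabilizer of `v` in `H` under the
self-similarity map. -/
def secSG (d : ℕ) (H : Subgroup (AutT d)) (v : Vertex d) : Subgroup (AutT d) :=
  (H.subgroupOf (stabT d v)).map (secHom d v)

/-- A subgroup of `Aut T_d` is self-similar if `H^v ≤ H` for every vertex `v`. -/
def IsSelfSimilar (d : ℕ) (H : Subgroup (AutT d)) : Prop :=
  ∀ v : Vertex d, secSG d H v ≤ H

/-- A subgroup of `Aut T_d` is fractal if `H^v = H` for every vertex `v`. -/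
def IsFractal (d : ℕ) (H : Subgroup (AutT d)) : Prop :=
  ∀ v : Vertex d, secSG d H v = H

end TreeDyn
namespace TreeDyn

open AutT

variable {d : ℕ}

instance : TopologicalSpace (Vertex d) := ⊥
instance : DiscreteTopology (Vertex d) := ⟨rfl⟩

/-- The profinite topology on `Aut T_d`: the topology of pointwise convergence on vertices. -/
instance : TopologicalSpace (AutT d) :=
  TopologicalSpace.induced (fun g : AutT d => (g.toPerm : Vertex d → Vertex d)) inferInstance

theorem continuous_toFun : Continuous fun g : AutT d => (g.toPerm : Vertex d → Vertex d) :=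
  continuous_induced_dom

theorem continuous_ev (x : Vertex d) : Continuous fun g : AutT d => g.toPerm x :=
  (continuous_apply x).comp continuous_toFun

instance : IsTopologicalGroup (AutT d) where
  continuous_mul := by
    apply continuous_induced_rng.2
    show Continuous fun p : AutT d × AutT d => ((p.1 * p.2).toPerm : Vertex d → Vertex d)
    apply continuous_pi
    intro x
    rw [continuous_discrete_rng]
    intro z
    have heq : ((fun p : AutT d × AutT d => (p.1 * p.2).toPerm x)) ⁻¹' {z}
        = ⋃ y : Vertex d, ((fun p : AutT d × AutT d => p.2.toPerm x) ⁻¹' {y})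
            ∩ ((fun p : AutT d × AutT d => p.1.toPerm y) ⁻¹' {z}) := by
      ext p
      simp only [Set.mem_preimage, Set.mem_singleton_iff, Set.mem_iUnion, Set.mem_inter_iff]
      constructor
      · intro h
        exact ⟨p.2.toPerm x, rfl, by rw [toPerm_mul, Equiv.Perm.mul_apply] at h; exact h⟩
      · rintro ⟨y, h1, h2⟩
        rw [toPerm_mul, Equiv.Perm.mul_apply, h1, h2]
    rw [heq]
    apply isOpen_iUnion
    intro y
    exact ((isOpen_discrete _).preimage ((continuous_ev x).comp continuous_snd)).inter
      ((isOpen_discrete _).preimage ((continuous_ev y).comp continuous_fst))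
  continuous_inv := by
    apply continuous_induced_rng.2
    show Continuous fun g : AutT d => ((g⁻¹).toPerm : Vertex d → Vertex d)
    apply continuous_pi
    intro x
    rw [continuous_discrete_rng]
    intro z
    have heq : (fun g : AutT d => (g⁻¹).toPerm x) ⁻¹' {z}
        = (fun g : AutT d => g.toPerm z) ⁻¹' {x} := by
      ext g
      simp only [Set.mem_preimage, Set.mem_singleton_iff]
      rw [toPerm_inv]
      exact Equiv.Perm.inv_eq_iff_eq.trans eq_comm
    rw [heq]
    exact (isOpen_discrete _).preimage (continuous_ev z)

end TreeDyn
namespace TreeDyn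

open AutT

/-- `J` is the self-similar closure of `H` in `G`: the smallest closed self-similar
subgroup of `G` containing `H`. -/
def IsSelfSimilarClosure (d : ℕ) (G H J : Subgroup (AutT d)) : Prop :=
  H ≤ J ∧ J ≤ G ∧ IsClosed (J : Set (AutT d)) ∧ IsSelfSimilar d J ∧
    ∀ J' : Subgroup (AutT d), H ≤ J' → J' ≤ G → IsClosed (J' : Set (AutT d)) →
      IsSelfSimilar d J' → J ≤ J'

/-- The pointwise stabilizer in `Aut T_d` of the vertices at level `m`. -/
def levelStab (d : ℕ) (m : ℕ) : Subgroup (AutT d) where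
  carrier := {g | ∀ v : Vertex d, v.length = m → g.toPerm v = v}
  one_mem' := fun _ _ => rfl
  mul_mem' := by
    intro a b ha hb v hv
    show (a * b).toPerm v = v
    rw [toPerm_mul, Equiv.Perm.mul_apply, hb v hv, ha v hv]
  inv_mem' := by
    intro a ha v hv
    show (a⁻¹).toPerm v = v
    rw [toPerm_inv, Equiv.Perm.inv_eq_iff_eq]
    exact (ha v hv).symm

/-- A topological group is pronilpotent if its quotient by every open normal subgroup
is nilpotent. -/
def Pronilpotent (G : Type*) [Group G] [TopologicalSpace G] : Prop :=
  ∀ (N : Subgroup G) [N.Normal], IsOpen (N : Set G) → Group.IsNilpotent (G ⧸ N)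

/-- A topological group is pro-`p` if its quotient by every open normal subgroup
is a `p`-group. -/
def IsProP (p : ℕ) (G : Type*) [Group G] [TopologicalSpace G] : Prop :=
  ∀ (N : Subgroup G) [N.Normal], IsOpen (N : Set G) → IsPGroup p (G ⧸ N)

/-- A topological group is prosolvable if its quotient by every open normal subgroup
is solvable. -/
def Prosolvable (G : Type*) [Group G] [TopologicalSpace G] : Prop :=
  ∀ (N : Subgroup G) [N.Normal], IsOpen (N : Set G) → IsSolvable (G ⧸ N)

/-- The Frattini subgroup of a topological group: the intersection of its
maximal open (proper) subgroups. -/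
def frattiniOpen (G : Type*) [Group G] [TopologicalSpace G] : Subgroup G :=
  sInf {M : Subgroup G | IsOpen (M : Set G) ∧ M ≠ ⊤ ∧
    ∀ M' : Subgroup G, IsOpen (M' : Set G) → M < M' → M' = ⊤}

end TreeDyn
namespace TreeDyn

open AutT

variable {d : ℕ}

/-- The cyclic successor on `Fin d`. -/
def succFin (x : Fin d) : Fin d :=
  ⟨(x.1 + 1) % d, Nat.mod_lt _ (Nat.lt_of_le_of_lt (Nat.zero_le _) x.2)⟩

/-- The cyclic predecessor on `Fin d`. -/
def predFin (x : Fin d) : Fin d :=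
  ⟨(x.1 + (d - 1)) % d, Nat.mod_lt _ (Nat.lt_of_le_of_lt (Nat.zero_le _) x.2)⟩

theorem predFin_succFin (x : Fin d) : predFin (succFin x) = x := by
  have hd : 0 < d := Nat.lt_of_le_of_lt (Nat.zero_le _) x.2
  apply Fin.ext
  show ((x.1 + 1) % d + (d - 1)) % d = x.1
  rw [Nat.mod_add_mod, show x.1 + 1 + (d - 1) = x.1 + d by omega, Nat.add_mod_right,
    Nat.mod_eq_of_lt x.2]

theorem succFin_predFin (x : Fin d) : succFin (predFin x) = x := by
  have hd : 0 < d := Nat.lt_of_le_of_lt (Nat.zero_le _) x.2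
  apply Fin.ext
  show ((x.1 + (d - 1)) % d + 1) % d = x.1
  rw [Nat.mod_add_mod, show x.1 + (d - 1) + 1 = x.1 + d by omega, Nat.add_mod_right,
    Nat.mod_eq_of_lt x.2]

theorem succFin_val_eq_zero_iff (x : Fin d) : (succFin x).1 = 0 ↔ x.1 + 1 = d := by
  show (x.1 + 1) % d = 0 ↔ x.1 + 1 = d
  by_cases h : x.1 + 1 = d
  · simp [h, Nat.mod_self]
  · rw [Nat.mod_eq_of_lt (by omega)]
    omega

theorem predFin_val_succ_eq_iff (x : Fin d) : (predFin x).1 + 1 = d ↔ x.1 = 0 := by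
  have hd : 0 < d := Nat.lt_of_le_of_lt (Nat.zero_le _) x.2
  show (x.1 + (d - 1)) % d + 1 = d ↔ x.1 = 0
  rcases Nat.eq_zero_or_pos x.1 with h | h
  · rw [h]
    simp only [Nat.zero_add]
    rw [Nat.mod_eq_of_lt (show d - 1 < d by omega)]
    simp only [iff_true, eq_self_iff_true]
    omega
  · rw [show x.1 + (d - 1) = (x.1 - 1) + d by omega, Nat.add_mod_right,
      Nat.mod_eq_of_lt (show x.1 - 1 < d by omega)]
    omega

/-- The odometer function: adds one with carrying, on words read root-first. -/
def odF (d : ℕ) : Vertex d → Vertex d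
  | [] => []
  | x :: u => succFin x :: (if x.1 + 1 = d then odF d u else u)

/-- The inverse odometer function. -/
def odG (d : ℕ) : Vertex d → Vertex d
  | [] => []
  | x :: u => predFin x :: (if x.1 = 0 then odG d u else u)

theorem odG_odF (u : Vertex d) : odG d (odF d u) = u := by
  induction u with
  | nil => rfl
  | cons x t ih =>
    simp only [odF, odG, predFin_succFin]
    by_cases h : x.1 + 1 = d
    · rw [if_pos h, if_pos ((succFin_val_eq_zero_iff x).mpr h), ih]
    · rw [if_neg h, if_neg (fun hc => h ((succFin_val_eq_zero_iff x).mp hc))]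

theorem odF_odG (u : Vertex d) : odF d (odG d u) = u := by
  induction u with
  | nil => rfl
  | cons x t ih =>
    simp only [odF, odG, succFin_predFin]
    by_cases h : x.1 = 0
    · rw [if_pos h, if_pos ((predFin_val_succ_eq_iff x).mpr h), ih]
    · rw [if_neg h, if_neg (fun hc => h ((predFin_val_succ_eq_iff x).mp hc))]

theorem odF_append (a b : Vertex d) :
    odF d (a ++ b) = odF d a ++ (if ∀ x ∈ a, x.1 + 1 = d then odF d b else b) := by
  induction a with
  | nil => simp [odF]
  | cons x t ih =>
    by_cases h : x.1 + 1 = d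
    · by_cases h2 : ∀ y ∈ t, y.1 + 1 = d
      · have hall : ∀ y ∈ x :: t, y.1 + 1 = d := by
          intro y hy
          rcases List.mem_cons.mp hy with rfl | hy
          · exact h
          · exact h2 y hy
        simp only [List.cons_append, List.append_eq, odF, if_pos h, if_pos h2, if_pos hall, ih]
      · have hall : ¬ ∀ y ∈ x :: t, y.1 + 1 = d :=
          fun hc => h2 fun y hy => hc y (List.mem_cons_of_mem x hy)
        simp only [List.cons_append, List.append_eq, odF, if_pos h, if_neg h2, if_neg hall, ih]
    · have hall : ¬ ∀ y ∈ x :: t, y.1 + 1 = d :=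
        fun hc => h (hc x List.mem_cons_self)
      simp only [List.cons_append, List.append_eq, odF, if_neg h, if_neg hall]

theorem odG_append (a b : Vertex d) :
    odG d (a ++ b) = odG d a ++ (if ∀ x ∈ a, x.1 = 0 then odG d b else b) := by
  induction a with
  | nil => simp [odG]
  | cons x t ih =>
    by_cases h : x.1 = 0
    · by_cases h2 : ∀ y ∈ t, y.1 = 0
      · have hall : ∀ y ∈ x :: t, y.1 = 0 := by
          intro y hy
          rcases List.mem_cons.mp hy with rfl | hy
          · exact h
          · exact h2 y hy
        simp only [List.cons_append, List.append_eq, odG, if_pos h, if_pos h2, if_pos hall, ih]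
      · have hall : ¬ ∀ y ∈ x :: t, y.1 = 0 :=
          fun hc => h2 fun y hy => hc y (List.mem_cons_of_mem x hy)
        simp only [List.cons_append, List.append_eq, odG, if_pos h, if_neg h2, if_neg hall, ih]
    · have hall : ¬ ∀ y ∈ x :: t, y.1 = 0 :=
        fun hc => h (hc x List.mem_cons_self)
      simp only [List.cons_append, List.append_eq, odG, if_neg h, if_neg hall]

theorem LP_odF : LP d (odF d) := by
  constructor
  · intro w
    induction w with
    | nil => rfl
    | cons x t ih =>
      simp only [odF]
      by_cases h : x.1 + 1 = d <;> simp [h, ih]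
  · intro v w h
    obtain ⟨t, rfl⟩ := h
    rw [odF_append]
    exact ⟨_, rfl⟩

theorem LP_odG : LP d (odG d) := by
  constructor
  · intro w
    induction w with
    | nil => rfl
    | cons x t ih =>
      simp only [odG]
      by_cases h : x.1 = 0 <;> simp [h, ih]
  · intro v w h
    obtain ⟨t, rfl⟩ := h
    rw [odG_append]
    exact ⟨_, rfl⟩

/-- The standard odometer as a permutation of the vertices. -/
def odPerm (d : ℕ) : Equiv.Perm (Vertex d) where
  toFun := odF d
  invFun := odG d
  left_inv := odG_odF
  right_inv := odF_odG

/-- The standard odometer `ω ∈ Aut T_d` (adds one to a `d`-adic digit string,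
with carrying). -/
def od (d : ℕ) : AutT d :=
  ⟨odPerm d, ⟨LP_odF, LP_odG⟩⟩

/-- The standard `d`-cycle `σ = (0 1 … d-1)` on the first level. -/
def sigmaFin (d : ℕ) : Equiv.Perm (Fin d) where
  toFun := succFin
  invFun := predFin
  left_inv := predFin_succFin
  right_inv := succFin_predFin

end TreeDyn


/-!
The sections of a power of the odometer are again powers of it: on a word `x :: u`, `ω ^ n`
adds `n` to the digit `x` and passes the carry `(x + n) / d` on to `u`, so
`ω ^ n |_[x] = ω ^ ((x + n) / d)`. Hence `⟨ω⟩` is self-similar, and self-similarity passes to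
the closure because vertex stabilizers are open and taking a section is continuous. Then `Ω` is
a closed self-similar subgroup of `G` containing every `H ≤ Ω`, so it contains the
self-similar closure of `H`.
-/

namespace TreeDyn

open AutT

variable {d : ℕ}

namespace AutT

theorem sec_nil (g : AutT d) : sec g [] = g := by
  apply Subtype.ext; apply Equiv.ext; intro u; rfl

theorem sec_append (g : AutT d) (a b : Vertex d) : sec g (a ++ b) = sec (sec g a) b := by
  apply Subtype.ext; apply Equiv.ext; intro u
  change (g.toPerm (a ++ b ++ u)).drop (a ++ b).length
    = ((g.toPerm (a ++ (b ++ u))).drop a.length).drop b.length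
  rw [List.drop_drop, List.length_append, List.append_assoc, Nat.add_comm]

theorem sec_inv_of_mem_stabT {g : AutT d} {v : Vertex d} (hg : g ∈ stabT d v) :
    sec g⁻¹ v = (sec g v)⁻¹ :=
  map_inv (secHom d v) ⟨g, hg⟩

theorem continuous_sec (v : Vertex d) : Continuous fun g : AutT d => sec g v := by
  refine continuous_induced_rng.2 (continuous_pi fun u => ?_)
  exact continuous_of_discreteTopology.comp (continuous_ev (v ++ u))

end AutT

theorem isOpen_stabT (v : Vertex d) : IsOpen (stabT d v : Set (AutT d)) :=
  (isOpen_discrete {v}).preimage (continuous_ev v)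

theorem IsSelfSimilar.topologicalClosure {K : Subgroup (AutT d)} (hK : IsSelfSimilar d K) :
    IsSelfSimilar d K.topologicalClosure := by
  rintro v _ ⟨g, hg, rfl⟩
  have hg_closure : (g : AutT d) ∈ closure ((stabT d v : Set (AutT d)) ∩ K) :=
    (isOpen_stabT v).inter_closure ⟨g.2, hg⟩
  have hsec_maps : Set.MapsTo (fun a : AutT d => sec a v) ((stabT d v : Set (AutT d)) ∩ K) K :=
    fun a ⟨has, haK⟩ => hK v ⟨⟨a, has⟩, haK, rfl⟩
  exact hsec_maps.closure (continuous_sec v) hg_closure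

theorem od_pow_apply_cons (n : ℕ) (x : Fin d) (u : Vertex d) :
    (od d ^ n).toPerm (x :: u)
      = ⟨(x + n) % d, Nat.mod_lt _ x.pos⟩ :: (od d ^ ((x + n) / d)).toPerm u := by
  induction n with
  | zero =>
    simp only [pow_zero, Nat.add_zero, Nat.div_eq_of_lt x.2, Nat.mod_eq_of_lt x.2]
    rfl
  | succ n ih =>
    have hd : 0 < d := x.pos
    rw [pow_succ', toPerm_mul, Equiv.Perm.mul_apply, ih]
    change odF d (_ :: _) = _
    have hdigit : succFin ⟨(x + n) % d, Nat.mod_lt _ hd⟩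
        = (⟨(x + (n + 1)) % d, Nat.mod_lt _ hd⟩ : Fin d) :=
      Fin.ext (by simp only [succFin, ← Nat.add_assoc, Nat.mod_add_mod])
    rw [odF, hdigit]
    congr 1
    have hdiv := Nat.div_add_mod (x + n) d
    dsimp only
    split_ifs with hcarry
    · have hnext : (x + (n + 1)) / d = (x + n) / d + 1 := by
        rw [show x + (n + 1) = d * ((x + n) / d + 1) by rw [Nat.mul_succ]; omega,
          Nat.mul_div_cancel_left _ hd]
      rw [hnext, pow_succ', toPerm_mul]
      rfl
    · have hlt : (x + n) % d + 1 < d := lt_of_le_of_ne (Nat.mod_lt _ hd) hcarry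
      rw [show x + (n + 1) = d * ((x + n) / d) + ((x + n) % d + 1) by omega,
        Nat.mul_add_div hd, Nat.div_eq_of_lt hlt, Nat.add_zero]

theorem sec_od_pow_singleton (n : ℕ) (x : Fin d) :
    sec (od d ^ n) [x] = od d ^ ((x + n) / d) := by
  apply Subtype.ext; apply Equiv.ext; intro u
  change ((od d ^ n).toPerm (x :: u)).drop 1 = _
  rw [od_pow_apply_cons]
  rfl

theorem exists_sec_od_pow_eq_pow (v : Vertex d) (n : ℕ) :
    ∃ m : ℕ, sec (od d ^ n) v = od d ^ m := by
  induction v generalizing n with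
  | nil => exact ⟨n, sec_nil _⟩
  | cons x w ih =>
    obtain ⟨m, hm⟩ := ih ((x + n) / d)
    refine ⟨m, ?_⟩
    rw [← List.singleton_append, sec_append, sec_od_pow_singleton, hm]

theorem sec_od_zpow_mem_zpowers {v : Vertex d} {k : ℤ} (hk : od d ^ k ∈ stabT d v) :
    sec (od d ^ k) v ∈ Subgroup.zpowers (od d) := by
  have hpow (n : ℕ) : sec (od d ^ n) v ∈ Subgroup.zpowers (od d) := by
    obtain ⟨m, hm⟩ := exists_sec_od_pow_eq_pow v n
    exact hm ▸ Subgroup.npow_mem_zpowers _ m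
  obtain ⟨n, rfl | rfl⟩ := Int.eq_nat_or_neg k
  · simpa only [zpow_natCast] using hpow n
  · rw [zpow_neg, zpow_natCast] at hk ⊢
    rw [sec_inv_of_mem_stabT (inv_mem_iff.mp hk)]
    exact inv_mem (hpow n)

theorem isSelfSimilar_zpowers_od : IsSelfSimilar d (Subgroup.zpowers (od d)) := by
  rintro v _ ⟨⟨g, hgv⟩, hg, rfl⟩
  obtain ⟨k, rfl⟩ := Subgroup.mem_zpowers_iff.mp hg
  exact sec_od_zpow_mem_zpowers hgv

theorem odometer_subgroups_ssc_general (d : ℕ)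
    (G : Subgroup (AutT d)) (hGclosed : IsClosed (G : Set (AutT d)))
    (hω : od d ∈ G) :
    (∀ H : Subgroup (AutT d), H ≤ (Subgroup.zpowers (od d)).topologicalClosure →
      IsClosed (H : Set (AutT d)) →
      ∀ J : Subgroup (AutT d), IsSelfSimilarClosure d G H J →
        J ≤ (Subgroup.zpowers (od d)).topologicalClosure) ∧
    IsSelfSimilar d ((Subgroup.zpowers (od d)).topologicalClosure) := by
  have hΩss : IsSelfSimilar d (Subgroup.zpowers (od d)).topologicalClosure :=
    isSelfSimilar_zpowers_od.topologicalClosure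
  have hΩG : (Subgroup.zpowers (od d)).topologicalClosure ≤ G :=
    Subgroup.topologicalClosure_minimal _ (Subgroup.zpowers_le.mpr hω) hGclosed
  refine ⟨fun H hH _ J hJ => ?_, hΩss⟩
  exact hJ.2.2.2.2 _ hH hΩG (Subgroup.isClosed_topologicalClosure _) hΩss

/-- **Subgroups of the closed group generated by the odometer are self-similarity-closed.**
Let `d ≥ 2` and let `G` be a closed self-similar subgroup of `Aut T_d` containing the
standard odometer `ω`; let `Ω` denote the topological closure of the cyclic subgroup
generated by `ω`.  Then for every closed subgroup `H ≤ Ω`, the self-similar closure of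
`H` in `G` is contained in `Ω`.  In particular `Ω` is itself self-similar. -/
theorem odometer_subgroups_ssc (d : ℕ) (hd : 2 ≤ d)
    (G : Subgroup (AutT d)) (hGclosed : IsClosed (G : Set (AutT d)))
    (hGss : IsSelfSimilar d G) (hω : od d ∈ G) :
    (∀ H : Subgroup (AutT d), H ≤ (Subgroup.zpowers (od d)).topologicalClosure →
      IsClosed (H : Set (AutT d)) →
      ∀ J : Subgroup (AutT d), IsSelfSimilarClosure d G H J →
        J ≤ (Subgroup.zpowers (od d)).topologicalClosure) ∧
    IsSelfSimilar d ((Subgroup.zpowers (od d)).topologicalClosure) :=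
  odometer_subgroups_ssc_general d G hGclosed hω

end TreeDyn
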